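/- arXiv:1602.07827 — 4 statements merged into one kernel-verified Lean document; each statement's English description precedes it below -/
import Mathlib

section
/- Let C₆ be the 6-cycle with vertices h₁,...,h₆ and let c : V(C₆) → ℕ be defined by c(h₁)=c(h₄)=0, c(h₂)=c(h₅)=36n², c(h₃)=1, c(h₆)=6n for some n ≥ 2. Let w assign weights w(h₁)=w(h₄)=180n³+1, w(h₂)=w(h₅)=1, w(h₃)=36n², w(h₆)=6n. Then any graph endomorphism g of C₆ satisfying w(hᵢ)·c(g(hᵢ)) ≤ 180n³ for all i must be the identity map. -/
def cycleG (n : ℕ) : SimpleGraph (ZMod n) :=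
  SimpleGraph.fromRel (fun i j => i = j + 1)

/-- The hexagon; vertex `hᵢ` is `(i : ZMod 6)` (so `h₆` is `0`). -/
def cycle6 : SimpleGraph (ZMod 6) := cycleG 6

lemma cycle6_adj_iff (a b : ZMod 6) :
    cycle6.Adj a b ↔ a ≠ b ∧ (a = b + 1 ∨ b = a + 1) := by
  unfold cycle6 cycleG
  rw [SimpleGraph.fromRel_adj]

lemma hexcases : ∀ v : ZMod 6,
    v = 0 ∨ v = 1 ∨ v = 2 ∨ v = 3 ∨ v = 4 ∨ v = 5 := by decide

set_option maxHeartbeats 1000000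

/-- any endomorphism of the hexagon respecting the weighted cost
bound `180n³` must be the identity. -/
theorem stmt1 (n : ℕ) (hn : 2 ≤ n)
    (c w : ZMod 6 → ℕ)
    (hc14 : c 1 = 0 ∧ c 4 = 0) (hc25 : c 2 = 36 * n ^ 2 ∧ c 5 = 36 * n ^ 2)
    (hc3 : c 3 = 1) (hc6 : c 0 = 6 * n)
    (hw14 : w 1 = 180 * n ^ 3 + 1 ∧ w 4 = 180 * n ^ 3 + 1)
    (hw25 : w 2 = 1 ∧ w 5 = 1) (hw3 : w 3 = 36 * n ^ 2) (hw6 : w 0 = 6 * n)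
    (g : cycle6 →g cycle6)
    (hbound : ∀ i : ZMod 6, w i * c (g i) ≤ 180 * n ^ 3) :
    ∀ i : ZMod 6, g i = i := by
  have hn2 : 0 < n ^ 2 := by positivity
  have hn3 : 0 < n ^ 3 := by positivity
  -- adjacency images
  have a01 : cycle6.Adj (g 0) (g 1) := g.map_adj (by rw [cycle6_adj_iff]; decide)
  have a12 : cycle6.Adj (g 1) (g 2) := g.map_adj (by rw [cycle6_adj_iff]; decide)
  have a23 : cycle6.Adj (g 2) (g 3) := g.map_adj (by rw [cycle6_adj_iff]; decide)
  have a34 : cycle6.Adj (g 3) (g 4) := g.map_adj (by rw [cycle6_adj_iff]; decide)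
  have a45 : cycle6.Adj (g 4) (g 5) := g.map_adj (by rw [cycle6_adj_iff]; decide)
  have a50 : cycle6.Adj (g 5) (g 0) := g.map_adj (by rw [cycle6_adj_iff]; decide)
  -- cost constraints
  -- g 1 ∈ {1, 4}
  have key14 : ∀ v : ZMod 6, c v = 0 → v = 1 ∨ v = 4 := by
    intro v hv
    rcases hexcases v with h | h | h | h | h | h <;> subst h
    · rw [hc6] at hv; omega
    · exact Or.inl rfl
    · rw [hc25.1] at hv; nlinarith
    · rw [hc3] at hv; omega
    · exact Or.inr rfl
    · rw [hc25.2] at hv; nlinarith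
  have czero : ∀ v : ZMod 6, (180 * n ^ 3 + 1) * c (g v) ≤ 180 * n ^ 3 → c (g v) = 0 := by
    intro v hv
    by_contra hne
    have : 1 ≤ c (g v) := Nat.one_le_iff_ne_zero.mpr hne
    nlinarith
  have hg1 : g 1 = 1 ∨ g 1 = 4 := by
    have h := hbound 1; rw [hw14.1] at h
    exact key14 _ (czero 1 h)
  have hg4 : g 4 = 1 ∨ g 4 = 4 := by
    have h := hbound 4; rw [hw14.2] at h
    exact key14 _ (czero 4 h)
  -- g 3 ∈ {1, 3, 4}
  have hg3 : g 3 = 1 ∨ g 3 = 3 ∨ g 3 = 4 := by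
    have h := hbound 3; rw [hw3] at h
    rcases hexcases (g 3) with h3 | h3 | h3 | h3 | h3 | h3 <;> rw [h3] at h ⊢
    · rw [hc6] at h; nlinarith
    · exact Or.inl rfl
    · rw [hc25.1] at h; nlinarith
    · exact Or.inr (Or.inl rfl)
    · exact Or.inr (Or.inr rfl)
    · rw [hc25.2] at h; nlinarith
  -- deduce g 3 = 3 and g 4 = 4 from adjacency
  have e3 : g 3 = 3 := by
    rcases hg3 with h3 | h3 | h3 <;> rcases hg4 with h4 | h4 <;>
      rw [h3, h4, cycle6_adj_iff] at a34 <;> first | exact h3 | exact absurd a34 (by decide)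
  have e4 : g 4 = 4 := by
    rcases hg4 with h4 | h4
    · rw [e3, h4, cycle6_adj_iff] at a34; exact absurd a34 (by decide)
    · exact h4
  -- g 2 ∈ {2, 4} (neighbors of 3)
  have hg2 : g 2 = 2 ∨ g 2 = 4 := by
    rw [e3] at a23
    rcases hexcases (g 2) with h2 | h2 | h2 | h2 | h2 | h2 <;>
      rw [h2] at a23 ⊢ <;> rw [cycle6_adj_iff] at a23 <;>
      first | exact Or.inl rfl | exact Or.inr rfl | exact absurd a23 (by decide)
  -- deduce g 2 = 2 and g 1 = 1
  have e1 : g 1 = 1 := by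
    rcases hg1 with h1 | h1
    · exact h1
    · rcases hg2 with h2 | h2 <;> rw [h1, h2, cycle6_adj_iff] at a12 <;>
        exact absurd a12 (by decide)
  have e2 : g 2 = 2 := by
    rcases hg2 with h2 | h2
    · exact h2
    · rw [e1, h2, cycle6_adj_iff] at a12; exact absurd a12 (by decide)
  -- g 0 : adjacent to g 1 = 1, so g 0 ∈ {0, 2}; cost excludes 2
  have e0 : g 0 = 0 := by
    rw [e1] at a01
    have hb := hbound 0; rw [hw6] at hb
    rcases hexcases (g 0) with h0 | h0 | h0 | h0 | h0 | h0 <;>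
      rw [h0] at a01 hb ⊢ <;> rw [cycle6_adj_iff] at a01 <;>
      first
        | rfl
        | exact absurd a01 (by decide)
        | (rw [hc25.1] at hb; nlinarith)
  -- g 5 : adjacent to 4 and 0, so g 5 = 5
  have e5 : g 5 = 5 := by
    rw [e4] at a45; rw [e0] at a50
    rcases hexcases (g 5) with h5 | h5 | h5 | h5 | h5 | h5 <;>
      rw [h5] at a45 a50 ⊢ <;> rw [cycle6_adj_iff] at a45 a50 <;>
      first | rfl | exact absurd a45 (by decide) | exact absurd a50 (by decide)
  intro i
  rcases hexcases i with h | h | h | h | h | h <;> rw [h] <;>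
    first | exact e0 | exact e1 | exact e2 | exact e3 | exact e4 | exact e5
end

section
/- Let G be a 3-partite graph with parts V₁, V₂, V₃, and let H' be the bipartite claw with vertices v₀, v₁, v₂, v₃, u₁, u₂, u₃ and edges u_jv_j and u_jv₀ (j = 1,2,3). Let I be an independent set in G with I_j = I ∩ V_j. Define f on the subdivision G* of G (each edge e replaced by a new vertex d_e adjacent to both ends of e) by: f(u) = v_j for u ∈ I_j, f(u) = v₀ for u ∈ V(G) \ I, f(d_e) = u_j if e has an endpoint in I_j, and f(d_e) = u₃ if both endpoints of e lie outside I. Then f is a graph homomorphism from G* to H'. -/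
def claw : SimpleGraph (Fin 7) :=
  SimpleGraph.fromRel (fun a b =>
    (a, b) ∈ ([(4,1),(5,2),(6,3),(4,0),(5,0),(6,0)] : List (Fin 7 × Fin 7)))

/-- the map `f_I` from the subdivision of a 3-partite graph `G`
determined by an independent set `I` is a homomorphism to the bipartite claw. -/
theorem stmt5 {V : Type} (G : SimpleGraph V) (V1 V2 V3 I : Set V)
    (hpart : ∀ x, x ∈ V1 ∨ x ∈ V2 ∨ x ∈ V3)
    (h12 : Disjoint V1 V2) (h13 : Disjoint V1 V3) (h23 : Disjoint V2 V3)
    (hV1 : ∀ x ∈ V1, ∀ y ∈ V1, ¬ G.Adj x y)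
    (hV2 : ∀ x ∈ V2, ∀ y ∈ V2, ¬ G.Adj x y)
    (hV3 : ∀ x ∈ V3, ∀ y ∈ V3, ¬ G.Adj x y)
    (hI : ∀ x ∈ I, ∀ y ∈ I, ¬ G.Adj x y)
    (Gstar : SimpleGraph (V ⊕ G.edgeSet))
    (hGstar : ∀ a b, Gstar.Adj a b ↔ ∃ (x : V) (e : G.edgeSet),
      x ∈ (e : Sym2 V) ∧ ((a = Sum.inl x ∧ b = Sum.inr e) ∨ (a = Sum.inr e ∧ b = Sum.inl x)))
    (f : V ⊕ G.edgeSet → Fin 7)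
    (hf1 : ∀ u ∈ I ∩ V1, f (Sum.inl u) = 1)
    (hf2 : ∀ u ∈ I ∩ V2, f (Sum.inl u) = 2)
    (hf3 : ∀ u ∈ I ∩ V3, f (Sum.inl u) = 3)
    (hf0 : ∀ u, u ∉ I → f (Sum.inl u) = 0)
    (hd1 : ∀ e : G.edgeSet, (∃ x ∈ I ∩ V1, x ∈ (e : Sym2 V)) → f (Sum.inr e) = 4)
    (hd2 : ∀ e : G.edgeSet, (∃ x ∈ I ∩ V2, x ∈ (e : Sym2 V)) → f (Sum.inr e) = 5)
    (hd3 : ∀ e : G.edgeSet, (∃ x ∈ I ∩ V3, x ∈ (e : Sym2 V)) → f (Sum.inr e) = 6)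
    (hdout : ∀ e : G.edgeSet, (∀ x ∈ (e : Sym2 V), x ∉ I) → f (Sum.inr e) = 6) :
    ∀ a b, Gstar.Adj a b → claw.Adj (f a) (f b) := by

  have hc : ∀ a b : Fin 7,
      (a ≠ b ∧ ((a, b) ∈ ([(4,1),(5,2),(6,3),(4,0),(5,0),(6,0)] : List (Fin 7 × Fin 7)) ∨
        (b, a) ∈ ([(4,1),(5,2),(6,3),(4,0),(5,0),(6,0)] : List (Fin 7 × Fin 7)))) →
      claw.Adj a b := by
    intro a b h
    rw [claw, SimpleGraph.fromRel_adj]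
    exact h
  have key : ∀ (x : V) (e : G.edgeSet), x ∈ (e : Sym2 V) →
      claw.Adj (f (Sum.inl x)) (f (Sum.inr e)) := by
    intro x e hxe
    obtain ⟨y, hspec⟩ : ∃ y, s(x, y) = (e : Sym2 V) := ⟨_, Sym2.other_spec hxe⟩
    have hye : y ∈ (e : Sym2 V) := by rw [← hspec]; exact Sym2.mem_mk_right x y
    have hadj : G.Adj x y := by
      have := e.prop
      rw [← hspec, SimpleGraph.mem_edgeSet] at this
      exact this
    by_cases hxI : x ∈ I
    · rcases hpart x with h1 | h2 | h3
      · rw [hf1 x ⟨hxI, h1⟩, hd1 e ⟨x, ⟨hxI, h1⟩, hxe⟩]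
        exact hc _ _ (by decide)
      · rw [hf2 x ⟨hxI, h2⟩, hd2 e ⟨x, ⟨hxI, h2⟩, hxe⟩]
        exact hc _ _ (by decide)
      · rw [hf3 x ⟨hxI, h3⟩, hd3 e ⟨x, ⟨hxI, h3⟩, hxe⟩]
        exact hc _ _ (by decide)
    · rw [hf0 x hxI]
      by_cases hyI : y ∈ I
      · rcases hpart y with h1 | h2 | h3
        · rw [hd1 e ⟨y, ⟨hyI, h1⟩, hye⟩]; exact hc _ _ (by decide)
        · rw [hd2 e ⟨y, ⟨hyI, h2⟩, hye⟩]; exact hc _ _ (by decide)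
        · rw [hd3 e ⟨y, ⟨hyI, h3⟩, hye⟩]; exact hc _ _ (by decide)
      · rw [hdout e ?_]
        · exact hc _ _ (by decide)
        · intro z hz
          rw [← hspec, Sym2.mem_iff] at hz
          rcases hz with rfl | rfl
          · exact hxI
          · exact hyI
  intro a b hab
  rw [hGstar] at hab
  obtain ⟨x, e, hxe, ⟨rfl, rfl⟩ | ⟨rfl, rfl⟩⟩ := hab
  · exact key x e hxe
  · exact (key x e hxe).symm
end

section
/- Every proper interval bigraph is a chordal bipartite graph; that is, if a bipartite graph H with parts X, Y admits inclusion-free families of real intervals (I_x)_{x∈X} and (J_y)_{y∈Y} such that xy ∈ E(H) iff I_x ∩ J_y ≠ ∅, then H contains no induced cycle of length at least 6. -/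
lemma coreStmt9 (n : ℕ) (hn : 6 ≤ n) (l r : ZMod n → ℝ)
    (hlr : ∀ i, l i ≤ r i)
    (hA : ∀ i : ZMod n, l (i + 1) ≤ r i ∧ l i ≤ r (i + 1))
    (hD : ∀ i : ZMod n, r i < l (i + 3) ∨ r (i + 3) < l i) : False := by
  -- propagation of the direction of separation
  have hP : ∀ i : ZMod n, r i < l (i + 3) → r (i + 1) < l ((i + 1) + 3) := by
    intro i h
    rcases hD (i + 1) with h' | h'
    · exact h'
    · exfalso
      have a1 := (hA i).1
      have a2 := (hA (i + 3)).2
      have e : i + 3 + 1 = i + 1 + 3 := by ring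
      rw [e] at a2
      linarith
  have hQ : ∀ i : ZMod n, r (i + 3) < l i → r ((i + 1) + 3) < l (i + 1) := by
    intro i h
    rcases hD (i + 1) with h' | h'
    · exfalso
      have a1 := (hA i).2
      have a2 := (hA (i + 3)).1
      have e : i + 3 + 1 = i + 1 + 3 := by ring
      rw [e] at a2
      linarith
    · exact h'
  rcases hD 0 with h0 | h0
  · have hall : ∀ k : ℕ, r ((k : ZMod n)) < l ((k : ZMod n) + 3) := by
      intro k
      induction k with
      | zero => simpa using h0
      | succ m ih =>
        have := hP _ ih
        have e : ((m + 1 : ℕ) : ZMod n) = (m : ZMod n) + 1 := by push_cast; ring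
        rw [e]
        exact this
    have hmono : ∀ k : ℕ, r ((3 * k : ℕ) : ZMod n) < r ((3 * (k + 1) : ℕ) : ZMod n) := by
      intro k
      have h1 := hall (3 * k)
      have h2 := hlr (((3 * k : ℕ) : ZMod n) + 3)
      have e : ((3 * (k + 1) : ℕ) : ZMod n) = ((3 * k : ℕ) : ZMod n) + 3 := by
        push_cast; ring
      rw [e]
      linarith
    have hsm : StrictMono (fun k : ℕ => r ((3 * k : ℕ) : ZMod n)) :=
      strictMono_nat_of_lt_succ hmono
    have h := hsm (show 0 < n by omega)
    have e : ((3 * n : ℕ) : ZMod n) = ((3 * 0 : ℕ) : ZMod n) := by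
      push_cast [ZMod.natCast_self]; ring
    simp only [e] at h
    exact lt_irrefl _ h
  · have hall : ∀ k : ℕ, r ((k : ZMod n) + 3) < l ((k : ZMod n)) := by
      intro k
      induction k with
      | zero => simpa using h0
      | succ m ih =>
        have := hQ _ ih
        have e : ((m + 1 : ℕ) : ZMod n) = (m : ZMod n) + 1 := by push_cast; ring
        rw [e]
        exact this
    have hmono : ∀ k : ℕ, l ((3 * (k + 1) : ℕ) : ZMod n) < l ((3 * k : ℕ) : ZMod n) := by
      intro k
      have h1 := hall (3 * k)
      have h2 := hlr (((3 * k : ℕ) : ZMod n) + 3)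
      have e : ((3 * (k + 1) : ℕ) : ZMod n) = ((3 * k : ℕ) : ZMod n) + 3 := by
        push_cast; ring
      rw [e]
      linarith
    have hsa : StrictAnti (fun k : ℕ => l ((3 * k : ℕ) : ZMod n)) :=
      strictAnti_nat_of_succ_lt hmono
    have h := hsa (show 0 < n by omega)
    have e : ((3 * n : ℕ) : ZMod n) = ((3 * 0 : ℕ) : ZMod n) := by
      push_cast [ZMod.natCast_self]; ring
    simp only [e] at h
    exact lt_irrefl _ h

/-- a proper interval bigraph has no induced cycle of length ≥ 6. -/
theorem stmt9 {V : Type} (H : SimpleGraph V) (X Y : Set V)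
    (hcover : ∀ v, v ∈ X ∨ v ∈ Y) (hdisj : Disjoint X Y)
    (hbip : ∀ u v, H.Adj u v → (u ∈ X ∧ v ∈ Y) ∨ (u ∈ Y ∧ v ∈ X))
    (a b p q : V → ℝ)
    (hab : ∀ x ∈ X, a x ≤ b x) (hpq : ∀ y ∈ Y, p y ≤ q y)
    (hrep : ∀ x ∈ X, ∀ y ∈ Y,
      (H.Adj x y ↔ (Set.Icc (a x) (b x) ∩ Set.Icc (p y) (q y)).Nonempty))
    (hpropX : ∀ x ∈ X, ∀ x' ∈ X, ¬ Set.Icc (a x) (b x) ⊂ Set.Icc (a x') (b x'))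
    (hpropY : ∀ y ∈ Y, ∀ y' ∈ Y, ¬ Set.Icc (p y) (q y) ⊂ Set.Icc (p y') (q y')) :
    ∀ n : ℕ, 6 ≤ n → ¬ ∃ φ : ZMod n → V, Function.Injective φ ∧
      ∀ i j, H.Adj (φ i) (φ j) ↔ (cycleG n).Adj i j := by
  classical
  rintro n hn ⟨φ, hinj, hφ⟩
  -- small natural numbers are nonzero in ZMod n
  have hnz : ∀ k : ℕ, 0 < k → k < n → ((k : ℕ) : ZMod n) ≠ 0 := by
    intro k hk1 hk2 h
    rw [ZMod.natCast_eq_zero_iff] at h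
    exact absurd (Nat.le_of_dvd hk1 h) (by omega)
  -- consecutive vertices are adjacent
  have hadj : ∀ i : ZMod n, H.Adj (φ i) (φ (i + 1)) := by
    intro i
    rw [hφ]
    refine ⟨?_, Or.inr rfl⟩
    intro h
    have h1 : (0 : ZMod n) + i = 1 + i := by
      rw [zero_add]; rw [add_comm]; exact h
    have := add_right_cancel h1
    have h2 : ((1 : ℕ) : ZMod n) ≠ 0 := hnz 1 (by omega) (by omega)
    simp at h2
    exact h2 this.symm
  -- vertices at distance 3 are not adjacent
  have hnadj : ∀ i : ZMod n, ¬ H.Adj (φ i) (φ (i + 3)) := by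
    intro i h
    rw [hφ] at h
    obtain ⟨hne, h5 | h5⟩ := h
    · have h1 : i + 0 = i + 4 := by
        calc i + 0 = i := add_zero i
        _ = i + 3 + 1 := h5
        _ = i + 4 := by ring
      have := add_left_cancel h1
      have h4 : ((4 : ℕ) : ZMod n) ≠ 0 := hnz 4 (by omega) (by omega)
      simp at h4
      exact h4 this.symm
    · have h1 : i + 3 = i + 1 := h5
      have h2 : i + 1 + 2 = i + 1 + 0 := by
        calc i + 1 + 2 = i + 3 := by ring
        _ = i + 1 := h1
        _ = i + 1 + 0 := by ring
      have := add_left_cancel h2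
      have h4 : ((2 : ℕ) : ZMod n) ≠ 0 := hnz 2 (by omega) (by omega)
      simp at h4
      exact h4 this
  have hXnY : ∀ v, v ∈ X → v ∉ Y := fun v hv => Set.disjoint_left.mp hdisj hv
  have hYnX : ∀ v, v ∈ Y → v ∉ X := fun v hv => Set.disjoint_right.mp hdisj hv
  have hY : ∀ v, v ∉ X → v ∈ Y := fun v h => (hcover v).resolve_left h
  -- sides alternate
  have halt : ∀ i : ZMod n, (φ i ∈ X ↔ φ (i + 1) ∉ X) := by
    intro i
    rcases hbip _ _ (hadj i) with ⟨h1, h2⟩ | ⟨h1, h2⟩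
    · exact ⟨fun _ => hYnX _ h2, fun _ => h1⟩
    · exact ⟨fun hx => absurd hx (hYnX _ h1), fun hnx => absurd h2 hnx⟩
  have hside3 : ∀ i : ZMod n, φ i ∈ X ↔ φ (i + 3) ∉ X := by
    intro i
    have e1 := halt i
    have e2 := halt (i + 1)
    have e3 := halt (i + 2)
    have q1 : i + 1 + 1 = i + 2 := by ring
    have q2 : i + 2 + 1 = i + 3 := by ring
    rw [q1] at e2; rw [q2] at e3
    tauto
  -- intervals
  set l : ZMod n → ℝ := fun i => if φ i ∈ X then a (φ i) else p (φ i) with hl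
  set r : ZMod n → ℝ := fun i => if φ i ∈ X then b (φ i) else q (φ i) with hr
  have hlr : ∀ i, l i ≤ r i := by
    intro i
    by_cases h : φ i ∈ X
    · simp only [hl, hr, if_pos h]; exact hab _ h
    · simp only [hl, hr, if_neg h]; exact hpq _ (hY _ h)
  -- adjacent vertices have intersecting intervals
  have hedge : ∀ i j : ZMod n, H.Adj (φ i) (φ j) → l j ≤ r i ∧ l i ≤ r j := by
    intro i j hij
    rcases hbip _ _ hij with ⟨hx, hy⟩ | ⟨hy, hx⟩
    · obtain ⟨z, ⟨hz1, hz2⟩, hz3, hz4⟩ := (hrep _ hx _ hy).mp hij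
      simp only [hl, hr, if_pos hx, if_neg (hYnX _ hy)]
      constructor <;> linarith
    · obtain ⟨z, ⟨hz1, hz2⟩, hz3, hz4⟩ := (hrep _ hx _ hy).mp hij.symm
      simp only [hl, hr, if_pos hx, if_neg (hYnX _ hy)]
      constructor <;> linarith
  have hA : ∀ i : ZMod n, l (i + 1) ≤ r i ∧ l i ≤ r (i + 1) := fun i => hedge i (i + 1) (hadj i)
  -- non-adjacent vertices at distance 3 have disjoint intervals
  have hD : ∀ i : ZMod n, r i < l (i + 3) ∨ r (i + 3) < l i := by
    intro i
    by_contra hc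
    push_neg at hc
    obtain ⟨hc1, hc2⟩ := hc
    apply hnadj i
    have m1 := hlr i
    have m2 := hlr (i + 3)
    by_cases hx : φ i ∈ X
    · have hy : φ (i + 3) ∉ X := (hside3 i).mp hx
      have hy' := hY _ hy
      refine (hrep _ hx _ hy').mpr ⟨max (l i) (l (i + 3)), ?_⟩
      simp only [hl, hr, if_pos hx, if_neg hy] at *
      constructor <;> simp only [Set.mem_Icc] <;>
        exact ⟨by simp, max_le (by linarith) (by linarith)⟩
    · have hy' := hY _ hx
      have hx3 : φ (i + 3) ∈ X := by
        by_contra h3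
        exact hx ((hside3 i).mpr h3)
      refine SimpleGraph.Adj.symm ?_
      refine (hrep _ hx3 _ hy').mpr ⟨max (l i) (l (i + 3)), ?_⟩
      simp only [hl, hr, if_pos hx3, if_neg hx] at *
      constructor <;> simp only [Set.mem_Icc] <;>
        exact ⟨by simp, max_le (by linarith) (by linarith)⟩
  exact coreStmt9 n hn l r hlr hA hD
end

section
/- The bipartite claw is not a proper interval bigraph: there is no inclusion-free interval representation of the tree with vertex set {v₀, v₁, v₂, v₃, u₁, u₂, u₃} and edges u₁v₁, u₂v₂, u₃v₃, u₁v₀, u₂v₀, u₃v₀. -/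
lemma mono_aux {pl ql pm qm : ℝ} (hl : pl ≤ ql) (h1 : pl ≤ pm)
    (h : ¬ Set.Icc pm qm ⊂ Set.Icc pl ql) : ql ≤ qm := by
  by_contra hlt
  push_neg at hlt
  exact h (Set.ssubset_iff_subset_ne.mpr
    ⟨Set.Icc_subset_Icc h1 hlt.le, fun heq =>
      absurd ((Set.ext_iff.mp heq ql).mpr ⟨hl, le_rfl⟩).2 (not_le.mpr hlt)⟩)

lemma middle_aux (a0 b0 am bm pl ql pm qm pr qr : ℝ)
    (hl : pl ≤ ql) (hr : pr ≤ qr)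
    (hplm : pl ≤ pm) (hqmr : qm ≤ qr)
    (H0l : (Set.Icc a0 b0 ∩ Set.Icc pl ql).Nonempty)
    (H0r : (Set.Icc a0 b0 ∩ Set.Icc pr qr).Nonempty)
    (Hm : (Set.Icc am bm ∩ Set.Icc pm qm).Nonempty)
    (Dl : ¬ (Set.Icc am bm ∩ Set.Icc pl ql).Nonempty)
    (Dr : ¬ (Set.Icc am bm ∩ Set.Icc pr qr).Nonempty)
    (Nc : ¬ Set.Icc am bm ⊂ Set.Icc a0 b0) : False := by
  obtain ⟨t, ⟨hamt, htbm⟩, hpmt, htqm⟩ := Hm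
  obtain ⟨u, ⟨ha0u, hub0⟩, hplu, huql⟩ := H0l
  obtain ⟨w, ⟨ha0w, hwb0⟩, hprw, hwqr⟩ := H0r
  have ha0ql : a0 ≤ ql := ha0u.trans huql
  have hprb0 : pr ≤ b0 := hprw.trans hwb0
  have hqlt : ql < t := by
    by_contra hle
    push_neg at hle
    exact Dl ⟨t, ⟨hamt, htbm⟩, hplm.trans hpmt, hle⟩
  have htpr : t < pr := by
    by_contra hle
    push_neg at hle
    exact Dr ⟨t, ⟨hamt, htbm⟩, hle, htqm.trans hqmr⟩
  by_cases hsub : Set.Icc am bm ⊆ Set.Icc a0 b0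
  · have heq : Set.Icc am bm = Set.Icc a0 b0 := by
      by_contra hne
      exact Nc (Set.ssubset_iff_subset_ne.mpr ⟨hsub, hne⟩)
    exact Dl ⟨u, heq ▸ (⟨ha0u, hub0⟩ : u ∈ Set.Icc a0 b0), hplu, huql⟩
  · rw [Set.not_subset] at hsub
    obtain ⟨s, ⟨hams, hsbm⟩, hs⟩ := hsub
    rw [Set.mem_Icc, not_and_or, not_le, not_le] at hs
    rcases hs with hs | hs
    · exact Dl ⟨ql, ⟨hams.trans (hs.le.trans ha0ql), hqlt.le.trans htbm⟩, hl, le_rfl⟩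
    · exact Dr ⟨pr, ⟨hamt.trans htpr.le, (hprb0.trans hs.le).trans hsbm⟩, le_rfl, hr⟩

/-- the bipartite claw admits no inclusion-free interval
representation, i.e. it is not a proper interval bigraph. Here the bipartition
is `X = {0,1,2,3} = {v₀,v₁,v₂,v₃}` and `Y = {4,5,6} = {u₁,u₂,u₃}`. -/
theorem stmt10 :
    ¬ ∃ (a b p q : Fin 7 → ℝ),
      (∀ x : Fin 7, x.val ≤ 3 → a x ≤ b x) ∧
      (∀ y : Fin 7, 4 ≤ y.val → p y ≤ q y) ∧
      (∀ x : Fin 7, x.val ≤ 3 → ∀ x' : Fin 7, x'.val ≤ 3 →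
        ¬ Set.Icc (a x) (b x) ⊂ Set.Icc (a x') (b x')) ∧
      (∀ y : Fin 7, 4 ≤ y.val → ∀ y' : Fin 7, 4 ≤ y'.val →
        ¬ Set.Icc (p y) (q y) ⊂ Set.Icc (p y') (q y')) ∧
      (∀ x : Fin 7, x.val ≤ 3 → ∀ y : Fin 7, 4 ≤ y.val →
        (claw.Adj x y ↔ (Set.Icc (a x) (b x) ∩ Set.Icc (p y) (q y)).Nonempty)) := by
  rintro ⟨a, b, p, q, hab, hpq, hI, hJ, hadj⟩
  have A04 := (hadj 0 (by decide) 4 (by decide)).mp (by simp only [claw, SimpleGraph.fromRel_adj]; decide)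
  have A05 := (hadj 0 (by decide) 5 (by decide)).mp (by simp only [claw, SimpleGraph.fromRel_adj]; decide)
  have A06 := (hadj 0 (by decide) 6 (by decide)).mp (by simp only [claw, SimpleGraph.fromRel_adj]; decide)
  have A14 := (hadj 1 (by decide) 4 (by decide)).mp (by simp only [claw, SimpleGraph.fromRel_adj]; decide)
  have A25 := (hadj 2 (by decide) 5 (by decide)).mp (by simp only [claw, SimpleGraph.fromRel_adj]; decide)
  have A36 := (hadj 3 (by decide) 6 (by decide)).mp (by simp only [claw, SimpleGraph.fromRel_adj]; decide)
  have N15 : ¬ (Set.Icc (a 1) (b 1) ∩ Set.Icc (p 5) (q 5)).Nonempty :=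
    fun h => (by simp only [claw, SimpleGraph.fromRel_adj]; decide : ¬ claw.Adj 1 5) ((hadj 1 (by decide) 5 (by decide)).mpr h)
  have N16 : ¬ (Set.Icc (a 1) (b 1) ∩ Set.Icc (p 6) (q 6)).Nonempty :=
    fun h => (by simp only [claw, SimpleGraph.fromRel_adj]; decide : ¬ claw.Adj 1 6) ((hadj 1 (by decide) 6 (by decide)).mpr h)
  have N24 : ¬ (Set.Icc (a 2) (b 2) ∩ Set.Icc (p 4) (q 4)).Nonempty :=
    fun h => (by simp only [claw, SimpleGraph.fromRel_adj]; decide : ¬ claw.Adj 2 4) ((hadj 2 (by decide) 4 (by decide)).mpr h)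
  have N26 : ¬ (Set.Icc (a 2) (b 2) ∩ Set.Icc (p 6) (q 6)).Nonempty :=
    fun h => (by simp only [claw, SimpleGraph.fromRel_adj]; decide : ¬ claw.Adj 2 6) ((hadj 2 (by decide) 6 (by decide)).mpr h)
  have N34 : ¬ (Set.Icc (a 3) (b 3) ∩ Set.Icc (p 4) (q 4)).Nonempty :=
    fun h => (by simp only [claw, SimpleGraph.fromRel_adj]; decide : ¬ claw.Adj 3 4) ((hadj 3 (by decide) 4 (by decide)).mpr h)
  have N35 : ¬ (Set.Icc (a 3) (b 3) ∩ Set.Icc (p 5) (q 5)).Nonempty :=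
    fun h => (by simp only [claw, SimpleGraph.fromRel_adj]; decide : ¬ claw.Adj 3 5) ((hadj 3 (by decide) 5 (by decide)).mpr h)
  have h4 := hpq 4 (by decide)
  have h5 := hpq 5 (by decide)
  have h6 := hpq 6 (by decide)
  rcases le_total (p 4) (p 5) with h1 | h1 <;> rcases le_total (p 5) (p 6) with h2 | h2
  · -- p4 ≤ p5 ≤ p6, middle J5, use I2
    exact middle_aux (a 0) (b 0) (a 2) (b 2) (p 4) (q 4) (p 5) (q 5) (p 6) (q 6)
      h4 h6 h1 (mono_aux h5 h2 (hJ 6 (by decide) 5 (by decide)))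
      A04 A06 A25 N24 N26 (hI 2 (by decide) 0 (by decide))
  · rcases le_total (p 4) (p 6) with h3 | h3
    · -- p4 ≤ p6 ≤ p5, middle J6, use I3
      exact middle_aux (a 0) (b 0) (a 3) (b 3) (p 4) (q 4) (p 6) (q 6) (p 5) (q 5)
        h4 h5 h3 (mono_aux h6 h2 (hJ 5 (by decide) 6 (by decide)))
        A04 A05 A36 N34 N35 (hI 3 (by decide) 0 (by decide))
    · -- p6 ≤ p4 ≤ p5, middle J4, use I1
      exact middle_aux (a 0) (b 0) (a 1) (b 1) (p 6) (q 6) (p 4) (q 4) (p 5) (q 5)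
        h6 h5 h3 (mono_aux h4 h1 (hJ 5 (by decide) 4 (by decide)))
        A06 A05 A14 N16 N15 (hI 1 (by decide) 0 (by decide))
  · rcases le_total (p 4) (p 6) with h3 | h3
    · -- p5 ≤ p4 ≤ p6, middle J4, use I1
      exact middle_aux (a 0) (b 0) (a 1) (b 1) (p 5) (q 5) (p 4) (q 4) (p 6) (q 6)
        h5 h6 h1 (mono_aux h4 h3 (hJ 6 (by decide) 4 (by decide)))
        A05 A06 A14 N15 N16 (hI 1 (by decide) 0 (by decide))
    · -- p5 ≤ p6 ≤ p4, middle J6, use I3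
      exact middle_aux (a 0) (b 0) (a 3) (b 3) (p 5) (q 5) (p 6) (q 6) (p 4) (q 4)
        h5 h4 h2 (mono_aux h6 h3 (hJ 4 (by decide) 6 (by decide)))
        A05 A04 A36 N35 N34 (hI 3 (by decide) 0 (by decide))
  · -- p6 ≤ p5 ≤ p4, middle J5, use I2
    exact middle_aux (a 0) (b 0) (a 2) (b 2) (p 6) (q 6) (p 5) (q 5) (p 4) (q 4)
      h6 h4 h2 (mono_aux h5 h1 (hJ 4 (by decide) 5 (by decide)))
      A06 A04 A25 N26 N24 (hI 2 (by decide) 0 (by decide))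
end
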